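/- For any family F of subsets of [n] with |F| > Σ(n,k-1), F contains a k-chain A_1 ⊊ A_2 ⊊ ... ⊊ A_k; equivalently, the maximum size of a family of subsets of [n] with no k-chain is exactly Σ(n,k-1), attained by B(n,k-1). -/

import Mathlib

def middleSum (n m : ℕ) : ℕ := ∑ i ∈ Finset.range m, n.choose ((n - m + 1) / 2 + i)

def middleFamily (n m : ℕ) : Finset (Finset (Fin n)) :=
  (Finset.univ : Finset (Finset (Fin n))).filter fun A =>
    A.card ∈ Finset.Icc ((n - m + 1) / 2) ((n - m + 1) / 2 + m - 1)

/-!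
Grading a family `F ⊆ 2^[n]` by height in `(F, ⊆)` splits it into `m` antichains as soon as it
has no chain of `m + 1` sets (Mirsky), so the LYM inequality gives `∑_{s ∈ F} 1 / C(n, |s|) ≤ m`.
Since `F` has at most `C(n, j)` members of size `j`, a fractional-knapsack argument then bounds
`|F|` by the sum of the `m` largest binomial coefficients `C(n, j)`, which are the middle ones.
-/

open Finset

namespace Nat

theorem choose_monotoneOn_Iic_half (n : ℕ) : MonotoneOn n.choose (Set.Iic (n / 2)) :=
  monotoneOn_of_le_succ Set.ordConnected_Iic fun _ _ _ ha =>
    choose_le_succ_of_lt_half_left (Order.succ_le_iff.1 ha)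

theorem choose_le_choose_of_le_of_le_sub {n i j : ℕ} (hij : i ≤ j) (hjn : j ≤ n - i) :
    n.choose i ≤ n.choose j := by
  rcases le_or_gt j (n / 2) with hj | hj
  · exact choose_monotoneOn_Iic_half n (Set.mem_Iic.2 (by omega)) hj hij
  · rw [← choose_symm (by omega : j ≤ n)]
    exact choose_monotoneOn_Iic_half n (Set.mem_Iic.2 (by omega)) (Set.mem_Iic.2 (by omega))
      (by omega)

end Nat

/-- Fractional knapsack: `c` separates the capacities `C j` of the indices in `S` from the
others, so a load `f ≤ C` of fractional size at most `#S` weighs at most `∑ j ∈ S, C j`. -/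
theorem Finset.sum_le_sum_of_sum_div_le_card {ι 𝕜 : Type*} [Field 𝕜] [LinearOrder 𝕜]
    [IsStrictOrderedRing 𝕜] [DecidableEq ι] {R S : Finset ι} {f C : ι → 𝕜} {c : 𝕜}
    (hSR : S ⊆ R) (hc : 0 ≤ c) (hC : ∀ j ∈ R, 0 < C j) (hfC : ∀ j ∈ S, f j ≤ C j)
    (hf : ∀ j ∈ R \ S, 0 ≤ f j) (hcS : ∀ j ∈ S, c ≤ C j) (hcR : ∀ j ∈ R \ S, C j ≤ c)
    (hsum : ∑ j ∈ R, f j / C j ≤ #S) :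
    ∑ j ∈ R, f j ≤ ∑ j ∈ S, C j := by
  have hin : ∀ j ∈ S, f j ≤ C j + c * (f j / C j - 1) := by
    intro j hj
    have hCj := hC j (hSR hj)
    have : c * (f j / C j - 1) = c / C j * (f j - C j) := by field_simp
    rw [this]
    nlinarith [hfC j hj, (div_le_one hCj).2 (hcS j hj)]
  have hout : ∀ j ∈ R \ S, f j ≤ c * (f j / C j) := by
    intro j hj
    rw [mul_div_left_comm]
    exact le_mul_of_one_le_right (hf j hj) ((one_le_div (hC j (mem_sdiff.1 hj).1)).2 (hcR j hj))
  calc ∑ j ∈ R, f j = ∑ j ∈ R \ S, f j + ∑ j ∈ S, f j := (sum_sdiff hSR).symm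
    _ ≤ ∑ j ∈ R \ S, c * (f j / C j) + ∑ j ∈ S, (C j + c * (f j / C j - 1)) :=
        add_le_add (sum_le_sum hout) (sum_le_sum hin)
    _ = ∑ j ∈ S, C j + c * (∑ j ∈ R, f j / C j - #S) := by
        rw [← sum_sdiff hSR (f := fun j => f j / C j)]
        simp only [sum_add_distrib, mul_sub, mul_one, sum_sub_distrib, ← mul_sum, sum_const,
          nsmul_eq_mul]
        ring
    _ ≤ ∑ j ∈ S, C j := by
        have := mul_nonpos_of_nonneg_of_nonpos hc (sub_nonpos.2 hsum)
        linarith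

theorem exists_strictMonoOn_lt_of_not_exists_strictMono {β : Type*} [PartialOrder β] {F : Set β}
    {m : ℕ} (hF : ¬∃ A : Fin (m + 1) → β, (∀ i, A i ∈ F) ∧ StrictMono A) :
    ∃ h : β → ℕ, StrictMonoOn h F ∧ ∀ b ∈ F, h b < m := by
  classical
  have hlt : ∀ b : F, Order.height b < m := by
    intro b
    by_contra! hb
    obtain ⟨p, -, hp⟩ := Order.exists_series_of_le_height b hb
    exact hF ⟨fun i => p (Fin.cast (by rw [hp]) i), fun i => (p _).2,
      Subtype.strictMono_coe _ |>.comp <| p.strictMono.comp fun _ _ h => h⟩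
  have hcoe (b : F) : ((Order.height b).toNat : ℕ∞) = Order.height b :=
    ENat.natCast_toNat (hlt b).ne_top
  refine ⟨fun b => if hb : b ∈ F then (Order.height (⟨b, hb⟩ : F)).toNat else 0, ?_, ?_⟩
  · intro a ha b hb hab
    simp only [ha, hb, dite_true, ← ENat.natCast_lt_natCast, hcoe]
    exact Order.height_strictMono (x := ⟨a, ha⟩) (y := ⟨b, hb⟩) hab (hlt _).ne_top.lt_top
  · intro b hb
    simpa only [hb, dite_true, ← ENat.natCast_lt_natCast, hcoe] using hlt ⟨b, hb⟩

theorem sum_inv_choose_card_le_of_strictMonoOn {α 𝕜 : Type*} [Fintype α] [Field 𝕜]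
    [LinearOrder 𝕜] [IsStrictOrderedRing 𝕜] {F : Finset (Finset α)} {m : ℕ} {h : Finset α → ℕ}
    (hmono : StrictMonoOn h F) (hlt : ∀ s ∈ F, h s < m) :
    ∑ s ∈ F, ((Fintype.card α).choose #s : 𝕜)⁻¹ ≤ m := by
  classical
  rw [← sum_fiberwise_of_maps_to (g := h) (t := range m) fun s hs => mem_range.2 (hlt s hs)]
  calc _ ≤ ∑ _t ∈ range m, (1 : 𝕜) := sum_le_sum fun t _ => ?_
    _ = m := by simp
  refine lubell_yamamoto_meshalkin_inequality_sum_inv_choose fun a ha b hb hne hab => ?_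
  simp only [coe_filter, Set.mem_ofPred_eq] at ha hb
  exact (hmono ha.1 hb.1 (lt_of_le_of_ne hab hne)).ne (ha.2.trans hb.2.symm)

theorem sum_inv_choose_card_eq_sum_card_slice_div {α 𝕜 : Type*} [Fintype α] [DecidableEq α]
    [DivisionSemiring 𝕜] (F : Finset (Finset α)) :
    ∑ s ∈ F, ((Fintype.card α).choose #s : 𝕜)⁻¹ =
      ∑ r ∈ Iic (Fintype.card α), #(F # r) / ((Fintype.card α).choose r : 𝕜) := by
  rw [← sum_fiberwise_of_maps_to (g := card) (t := Iic _) fun s _ => mem_Iic.2 (card_le_univ s)]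
  refine sum_congr rfl fun r _ => ?_
  rw [sum_congr rfl fun s hs => by rw [(mem_filter.1 hs).2], sum_const, nsmul_eq_mul,
    div_eq_mul_inv]
  rfl

theorem middleSum_eq_sum_Ico (n m : ℕ) :
    middleSum n m = ∑ j ∈ Ico ((n - m + 1) / 2) ((n - m + 1) / 2 + m), n.choose j := by
  rw [middleSum, sum_Ico_eq_sum_range, Nat.add_sub_cancel_left]

theorem two_pow_le_middleSum {n m : ℕ} (h : n < m) : 2 ^ n ≤ middleSum n m := by
  rw [middleSum, ← Nat.sum_range_choose, show (n - m + 1) / 2 = 0 by omega]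
  simpa using sum_le_sum_of_subset (f := n.choose) (range_subset_range.2 h)

theorem card_le_middleSum_of_not_exists_strictMono {α : Type*} [Fintype α] [DecidableEq α]
    {F : Finset (Finset α)} {m : ℕ}
    (hF : ¬∃ A : Fin (m + 1) → Finset α, (∀ i, A i ∈ F) ∧ StrictMono A) :
    #F ≤ middleSum (Fintype.card α) m := by
  set n := Fintype.card α
  rcases lt_or_ge n m with hnm | hmn
  · exact (card_le_univ F).trans (by simpa [Fintype.card_finset] using two_pow_le_middleSum hnm)
  obtain ⟨h, hmono, hlt⟩ :=
    exists_strictMonoOn_lt_of_not_exists_strictMono (F := (F : Set (Finset α))) hF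
  have hLYM := sum_inv_choose_card_le_of_strictMonoOn (𝕜 := ℚ) hmono hlt
  rw [sum_inv_choose_card_eq_sum_card_slice_div] at hLYM
  set l := (n - m + 1) / 2
  rw [middleSum_eq_sum_Ico, ← sum_card_slice]
  -- The window `[l, l + m)` is centred at `n / 2`, so by unimodality it holds the `m` largest
  -- binomial coefficients `C(n, j)`, all at least `C(n, l)`.
  have := sum_le_sum_of_sum_div_le_card (R := Iic n) (S := Ico l (l + m))
    (f := fun r => (#(F # r) : ℚ)) (C := fun r => (n.choose r : ℚ)) (c := n.choose l)
    (fun j hj => by simp only [mem_Ico, mem_Iic] at hj ⊢; omega) (by positivity)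
    (fun j hj => Nat.cast_pos.2 (Nat.choose_pos (mem_Iic.1 hj)))
    (fun j _ => by exact_mod_cast sized_slice.card_le) (fun j _ => by positivity)
    (fun j hj => by
      simp only [mem_Ico] at hj
      exact_mod_cast Nat.choose_le_choose_of_le_of_le_sub hj.1 (by omega))
    (fun j hj => by
      simp only [mem_sdiff, mem_Ico, mem_Iic, not_and_or, not_le] at hj
      rcases hj with ⟨hjn, hjl | hjr⟩
      · exact_mod_cast Nat.choose_le_choose_of_le_of_le_sub hjl.le (by omega)
      · rw [← Nat.choose_symm hjn]
        exact_mod_cast Nat.choose_le_choose_of_le_of_le_sub (by omega) (by omega))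
    (by simpa using hLYM)
  exact_mod_cast this

theorem card_filter_card_mem {α : Type*} [Fintype α] [DecidableEq α] (T : Finset ℕ) :
    #(univ.filter fun s : Finset α => #s ∈ T) = ∑ j ∈ T, (Fintype.card α).choose j := by
  rw [card_eq_sum_card_fiberwise (f := card) (t := T) fun s hs => by simpa using hs]
  refine sum_congr rfl fun j hj => ?_
  rw [← card_univ, ← card_powersetCard]
  congr 1
  ext s
  simp only [mem_filter, mem_univ, true_and, mem_powersetCard_univ, and_iff_right_iff_imp]
  rintro rfl
  exact hj

theorem card_middleFamily (n : ℕ) {m : ℕ} (hm : m ≠ 0) :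
    #(middleFamily n m) = middleSum n m := by
  rw [middleFamily, card_filter_card_mem, Fintype.card_fin, middleSum_eq_sum_Ico]
  congr 1
  ext j
  simp only [mem_Icc, mem_Ico]
  omega

theorem not_exists_strictMono_middleFamily (n : ℕ) {k : ℕ} (hk : 2 ≤ k) :
    ¬∃ A : Fin k → Finset (Fin n), (∀ i, A i ∈ middleFamily n (k - 1)) ∧ StrictMono A := by
  rintro ⟨A, hA, hmono⟩
  have := card_le_card_of_injOn (s := univ) (fun i => #(A i))
    (fun i _ => (mem_filter.1 (hA i)).2) (card_strictMono.comp hmono).injective.injOn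
  simp only [card_univ, Fintype.card_fin, Nat.card_Icc] at this
  omega

/-- Erdős's theorem with the extremal example: families larger than Σ(n,k-1) contain
a k-chain, and B(n,k-1) has size Σ(n,k-1) with no k-chain. -/
theorem erdos_extremal (n k : ℕ) (hk : 2 ≤ k) :
    (∀ F : Finset (Finset (Fin n)), middleSum n (k - 1) < F.card →
        ∃ A : Fin k → Finset (Fin n),
          (∀ i, A i ∈ F) ∧ ∀ i j : Fin k, i < j → A i ⊂ A j) ∧
    (middleFamily n (k - 1)).card = middleSum n (k - 1) ∧
    ¬ ∃ A : Fin k → Finset (Fin n),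
        (∀ i, A i ∈ middleFamily n (k - 1)) ∧ ∀ i j : Fin k, i < j → A i ⊂ A j := by
  refine ⟨fun F hF => ?_, card_middleFamily n (by omega), not_exists_strictMono_middleFamily n hk⟩
  obtain ⟨m, rfl⟩ : ∃ m, k = m + 1 := ⟨k - 1, by omega⟩
  by_contra hno
  simpa using hF.trans_le (card_le_middleSum_of_not_exists_strictMono hno)
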